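/- Let M be a real symmetric m×m matrix with strictly positive entries such that the quadratic function q(v) := ⟨x+v, My⟩² − ⟨x+v, M(x+v)⟩·⟨y, My⟩ is nonnegative for all v in a neighborhood of 0, where x, y ∈ ℝ^m are linearly independent with strictly positive entries and q(0) = 0. Then the vector z := ⟨y, My⟩·x − ⟨x, My⟩·y is a nonzero element of the kernel of M, and in particular det(M) = 0. -/

import Mathlib

/-!
Since `q ≥ 0` near `0` and `q 0 = 0`, the origin is a local minimum of `q`, so the derivative of
`t ↦ q (t • w)` at `0` vanishes for every direction `w`. For symmetric `M` that derivative is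
`2 (⟨x, My⟩⟨w, My⟩ − ⟨y, My⟩⟨w, Mx⟩) = -2 ⟨w, Mz⟩`, hence `Mz = 0`. The vector `z` is nonzero
because its coefficient `⟨y, My⟩` of `x` is positive and `x, y` are independent.
-/

open Matrix Filter Topology

theorem Matrix.IsSymm.dotProduct_mulVec_comm {n R : Type*} [Fintype n] [CommSemiring R]
    {M : Matrix n n R} (hM : M.IsSymm) (u v : n → R) : u ⬝ᵥ M *ᵥ v = v ⬝ᵥ M *ᵥ u := by
  rw [dotProduct_mulVec, ← mulVec_transpose, hM.eq, dotProduct_comm]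

theorem Matrix.IsSymm.add_smul_dotProduct_mulVec_add_smul {n R : Type*} [Fintype n] [CommRing R]
    {M : Matrix n n R} (hM : M.IsSymm) (x w : n → R) (t : R) :
    (x + t • w) ⬝ᵥ M *ᵥ (x + t • w) =
      x ⬝ᵥ M *ᵥ x + 2 * t * (w ⬝ᵥ M *ᵥ x) + t ^ 2 * (w ⬝ᵥ M *ᵥ w) := by
  simp only [mulVec_add, mulVec_smul, add_dotProduct, dotProduct_add, smul_dotProduct,
    dotProduct_smul, smul_eq_mul, hM.dotProduct_mulVec_comm x w]
  ring

theorem eq_zero_of_eventually_nonneg_mul_add_mul_sq {b c : ℝ}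
    (h : ∀ᶠ t in 𝓝 0, 0 ≤ b * t + c * t ^ 2) : b = 0 := by
  have hmin : IsLocalMin (fun t : ℝ => b * t + c * t ^ 2) 0 := by
    filter_upwards [h] with t ht
    simpa using ht
  refine hmin.hasDerivAt_eq_zero ?_
  simpa using ((hasDerivAt_id' (0 : ℝ)).const_mul b).fun_add
    ((hasDerivAt_pow 2 (0 : ℝ)).const_mul c)

theorem Matrix.IsSymm.mulVec_smul_sub_smul_eq_zero {n : Type*} [Fintype n]
    {M : Matrix n n ℝ} (hM : M.IsSymm) {x y : n → ℝ}
    (hq0 : (x ⬝ᵥ M *ᵥ y) ^ 2 - (x ⬝ᵥ M *ᵥ x) * (y ⬝ᵥ M *ᵥ y) = 0)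
    (hq : ∀ᶠ v in 𝓝 0,
      0 ≤ ((x + v) ⬝ᵥ M *ᵥ y) ^ 2 - ((x + v) ⬝ᵥ M *ᵥ (x + v)) * (y ⬝ᵥ M *ᵥ y)) :
    M *ᵥ ((y ⬝ᵥ M *ᵥ y) • x - (x ⬝ᵥ M *ᵥ y) • y) = 0 := by
  rw [← dotProduct_eq_zero_iff]
  intro w
  have hline : Tendsto (fun t : ℝ => t • w) (𝓝 0) (𝓝 0) := by
    simpa using (tendsto_id (x := 𝓝 (0 : ℝ))).smul_const w
  have hfirst : 2 * ((x ⬝ᵥ M *ᵥ y) * (w ⬝ᵥ M *ᵥ y) - (y ⬝ᵥ M *ᵥ y) * (w ⬝ᵥ M *ᵥ x)) = 0 := by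
    refine eq_zero_of_eventually_nonneg_mul_add_mul_sq
      (c := (w ⬝ᵥ M *ᵥ y) ^ 2 - (w ⬝ᵥ M *ᵥ w) * (y ⬝ᵥ M *ᵥ y)) ?_
    filter_upwards [hline.eventually hq] with t ht
    rw [hM.add_smul_dotProduct_mulVec_add_smul] at ht
    simp only [add_dotProduct, smul_dotProduct, smul_eq_mul] at ht
    linear_combination ht + hq0
  rw [mulVec_sub, mulVec_smul, mulVec_smul, sub_dotProduct, smul_dotProduct, smul_dotProduct,
    smul_eq_mul, smul_eq_mul, dotProduct_comm (M *ᵥ x), dotProduct_comm (M *ᵥ y)]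
  linarith

theorem dotProduct_mulVec_pos {n R : Type*} [Fintype n] [Nonempty n] [CommSemiring R]
    [PartialOrder R] [IsStrictOrderedRing R] {M : Matrix n n R} (hM : ∀ i j, 0 < M i j)
    {x y : n → R} (hx : ∀ i, 0 < x i) (hy : ∀ i, 0 < y i) : 0 < x ⬝ᵥ M *ᵥ y :=
  Finset.sum_pos (fun i _ => mul_pos (hx i)
    (Finset.sum_pos (fun j _ => mul_pos (hM i j) (hy j)) Finset.univ_nonempty))
    Finset.univ_nonempty

theorem LinearIndependent.smul_sub_smul_ne_zero {R V : Type*} [Ring R] [AddCommGroup V]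
    [Module R V] {x y : V} (hli : LinearIndependent R ![x, y]) {s : R} (hs : s ≠ 0) (t : R) :
    s • x - t • y ≠ 0 := fun h =>
  hs (LinearIndependent.pair_iff.mp hli s (-t) (by rwa [neg_smul, ← sub_eq_add_neg])).1

theorem stmt_8_general (m : ℕ) (M : Matrix (Fin m) (Fin m) ℝ) (hM : M.IsHermitian)
    (hpos : ∀ i j, 0 < M i j) (x y : Fin m → ℝ)
    (hy : ∀ i, 0 < y i)
    (hli : LinearIndependent ℝ ![x, y])
    (hq0 : ((x ⬝ᵥ M.mulVec y) ^ 2 - (x ⬝ᵥ M.mulVec x) * (y ⬝ᵥ M.mulVec y)) = 0)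
    (hq : ∀ᶠ v in nhds (0 : Fin m → ℝ),
      0 ≤ ((x + v) ⬝ᵥ M.mulVec y) ^ 2 - ((x + v) ⬝ᵥ M.mulVec (x + v)) * (y ⬝ᵥ M.mulVec y)) :
    (y ⬝ᵥ M.mulVec y) • x - (x ⬝ᵥ M.mulVec y) • y ≠ 0 ∧
      M.mulVec ((y ⬝ᵥ M.mulVec y) • x - (x ⬝ᵥ M.mulVec y) • y) = 0 ∧
      M.det = 0 := by
  have : Nonempty (Fin m) := by
    obtain ⟨i, -⟩ := Function.ne_iff.mp (hli.ne_zero 0)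
    exact ⟨i⟩
  have hz : (y ⬝ᵥ M *ᵥ y) • x - (x ⬝ᵥ M *ᵥ y) • y ≠ 0 :=
    hli.smul_sub_smul_ne_zero (dotProduct_mulVec_pos hpos hy hy).ne' _
  have hker := (isHermitian_iff_isSymm.mp hM).mulVec_smul_sub_smul_eq_zero hq0 hq
  exact ⟨hz, hker, exists_mulVec_eq_zero_iff.mp ⟨_, hz, hker⟩⟩

/-- If `q(v) = ⟨x+v, My⟩² − ⟨x+v, M(x+v)⟩·⟨y, My⟩` is nonnegative near `0` and
vanishes at `0`, with `x, y` linearly independent strictly positive vectors, then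
`z = ⟨y, My⟩·x − ⟨x, My⟩·y` is a nonzero kernel vector of `M`, so `det M = 0`. -/
theorem stmt_8 (m : ℕ) (M : Matrix (Fin m) (Fin m) ℝ) (hM : M.IsHermitian)
    (hpos : ∀ i j, 0 < M i j) (x y : Fin m → ℝ)
    (hx : ∀ i, 0 < x i) (hy : ∀ i, 0 < y i)
    (hli : LinearIndependent ℝ ![x, y])
    (hq0 : ((x ⬝ᵥ M.mulVec y) ^ 2 - (x ⬝ᵥ M.mulVec x) * (y ⬝ᵥ M.mulVec y)) = 0)
    (hq : ∀ᶠ v in nhds (0 : Fin m → ℝ),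
      0 ≤ ((x + v) ⬝ᵥ M.mulVec y) ^ 2 - ((x + v) ⬝ᵥ M.mulVec (x + v)) * (y ⬝ᵥ M.mulVec y)) :
    (y ⬝ᵥ M.mulVec y) • x - (x ⬝ᵥ M.mulVec y) • y ≠ 0 ∧
      M.mulVec ((y ⬝ᵥ M.mulVec y) • x - (x ⬝ᵥ M.mulVec y) • y) = 0 ∧
      M.det = 0 :=
  stmt_8_general m M hM hpos x y hy hli hq0 hq
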